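/- There exists a constant C > 0, depending only on M*, the supremum of β and the Lipschitz constant of β, such that for every t ∈ (0, t₁] and every σ as in the context: (i) ∫₀^t sup_{(m,x) ∈ Ω_M} |Q_l(σ,σ)(s,m,x)| ds ≤ C t ‖σ‖²_∞; (ii) for a.e. s ∈ (0,t) the map (m,x) ↦ Q_l(σ,σ)(s,m,x) is Lipschitz on Ω_M with constant at most C(‖σ‖²_∞ + L_σ²), so that ∫₀^t Lip(Q_l(σ,σ)(s,·)) ds ≤ C t (‖σ‖²_∞ + L_σ²). -/

import Mathlib

/-!
Write `Q(m) = (m/2) G(m)` with `G(m) = ∫₀^m β(a, m - a) σ(a) σ(m - a) da`. The integrand is bounded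
by `B N²`, and moving `(m, x)` to `(m', x')` changes it by at most
`(B + L)(N² + L_σ²)(|m - m'| + |x - x'|)` while the domain of integration grows by `|m - m'|`; this
gives the Lipschitz bound for `0 ≤ m ≤ m' ≤ M*`. Since `β` vanishes on `{m' + m'' ≥ M*}`, `Q(·, x)` is
constant on each side of `[0, M*]`, so composing with the 1-Lipschitz projection onto `[0, M*]`
extends the bound to all `m`. Both time integrals then follow from these bounds, valid for a.e. `s`.
-/

open MeasureTheory Set

noncomputable section

/-- `Vec n` is ℝ^n with the Euclidean norm. -/
abbrev Vec (n : ℕ) : Type := EuclideanSpace ℝ (Fin n)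

/-- `Ω = ℝ² × (0,1) ⊆ ℝ³`. -/
def Omg : Set (Vec 3) := {x | x (Fin.last 2) ∈ Set.Ioo (0:ℝ) 1}

/-- the coagulation operator
`Q_l(σ,σ)(s,m,x) = (m/2) ∫₀^m β(m',m−m') σ(s,m',x) σ(s,m−m',x) dm'` for
`m ≥ 0`, and `0` for `m < 0`. -/
def Qcoag (β : ℝ → ℝ → ℝ) (σ : ℝ → ℝ → Vec 3 → ℝ) (s m : ℝ) (x : Vec 3) : ℝ :=
  if 0 ≤ m then
    (m / 2) * ∫ m' in (0:ℝ)..m, β m' (m - m') * σ s m' x * σ s (m - m') x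
  else 0

lemma abs_mul_mul_le {a b c A B C : ℝ} (ha : |a| ≤ A) (hb : |b| ≤ B) (hc : |c| ≤ C) :
    |a * b * c| ≤ A * B * C := by
  rw [abs_mul, abs_mul]
  have hA := (abs_nonneg a).trans ha
  have hB := (abs_nonneg b).trans hb
  exact mul_le_mul (mul_le_mul ha hb (abs_nonneg b) hA) hc (abs_nonneg c) (mul_nonneg hA hB)

lemma intervalIntegral_le_mul_of_ae_le {f : ℝ → ℝ} {a b K : ℝ} (hab : a ≤ b) (hK : 0 ≤ K)
    (h : ∀ᵐ s ∂volume.restrict (Ioo a b), f s ≤ K) :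
    ∫ s in a..b, f s ≤ K * (b - a) := by
  by_cases hf : IntervalIntegrable f volume a b
  · rw [Measure.restrict_congr_set Ioo_ae_eq_Icc] at h
    simpa [mul_comm] using
      intervalIntegral.integral_mono_ae_restrict hab hf intervalIntegrable_const h
  · rw [intervalIntegral.integral_undef hf]
    exact mul_nonneg hK (sub_nonneg.2 hab)

structure IsCoagKernel (β : ℝ → ℝ → ℝ) (B L M : ℝ) : Prop where
  measurable : Measurable (Function.uncurry β)
  nonneg : ∀ m m', 0 ≤ β m m'
  le_bound : ∀ m m', β m m' ≤ B
  lipschitz : ∀ m m' n n', |β m m' - β n n'| ≤ L * (|m - n| + |m' - n'|)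
  eq_zero_of_le_add : ∀ m m', M ≤ m + m' → β m m' = 0

namespace IsCoagKernel

variable {β : ℝ → ℝ → ℝ} {B L M : ℝ}

lemma abs_le (hβ : IsCoagKernel β B L M) (m m' : ℝ) : |β m m'| ≤ B := by
  rw [abs_of_nonneg (hβ.nonneg m m')]
  exact hβ.le_bound m m'

lemma bound_nonneg (hβ : IsCoagKernel β B L M) : 0 ≤ B :=
  (abs_nonneg _).trans (hβ.abs_le 0 0)

lemma lipschitzConst_nonneg (hβ : IsCoagKernel β B L M) : 0 ≤ L := by
  simpa using (abs_nonneg _).trans (hβ.lipschitz 1 0 0 0)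

lemma bound_mul_sq_le (hβ : IsCoagKernel β B L M) (N Lσ : ℝ) :
    B * N ^ 2 ≤ (B + L) * (N ^ 2 + Lσ ^ 2) := by
  nlinarith [mul_nonneg hβ.lipschitzConst_nonneg (sq_nonneg N),
    mul_nonneg (add_nonneg hβ.bound_nonneg hβ.lipschitzConst_nonneg) (sq_nonneg Lσ)]

end IsCoagKernel

def coagIntegral (β : ℝ → ℝ → ℝ) (f : ℝ → ℝ) (m : ℝ) : ℝ :=
  ∫ a in (0:ℝ)..m, β a (m - a) * f a * f (m - a)

lemma Qcoag_eq_ite (β : ℝ → ℝ → ℝ) (σ : ℝ → ℝ → Vec 3 → ℝ) (s m : ℝ) (x : Vec 3) :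
    Qcoag β σ s m x = if 0 ≤ m then m / 2 * coagIntegral β (fun a => σ s a x) m else 0 :=
  rfl

section CoagIntegral

variable {β : ℝ → ℝ → ℝ} {B L M N Lσ δ : ℝ} {f g : ℝ → ℝ}

lemma abs_coagIntegrand_le (hβ : IsCoagKernel β B L M) (hf : ∀ a, |f a| ≤ N) (a b c d : ℝ) :
    |β a b * f c * f d| ≤ B * N ^ 2 :=
  (abs_mul_mul_le (hβ.abs_le a b) (hf c) (hf d)).trans_eq (by ring)

lemma intervalIntegrable_coagIntegrand (hβ : IsCoagKernel β B L M) (hfm : Measurable f)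
    (hf : ∀ a, |f a| ≤ N) (m c d : ℝ) :
    IntervalIntegrable (fun a => β a (m - a) * f a * f (m - a)) volume c d := by
  have hsub : Measurable fun a : ℝ => m - a := measurable_const.sub measurable_id
  refine (intervalIntegrable_const (c := B * N ^ 2)).mono_fun' ?_
    (ae_of_all _ fun a => abs_coagIntegrand_le hβ hf a (m - a) a (m - a))
  exact (((hβ.measurable.comp (measurable_id.prodMk hsub)).mul hfm).mul
    (hfm.comp hsub)).aestronglyMeasurable

lemma abs_coagIntegral_le (hβ : IsCoagKernel β B L M) (hf : ∀ a, |f a| ≤ N) {m : ℝ}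
    (hm : 0 ≤ m) : |coagIntegral β f m| ≤ B * N ^ 2 * m := by
  simpa [coagIntegral, abs_of_nonneg hm] using intervalIntegral.norm_integral_le_of_norm_le_const
    (f := fun a => β a (m - a) * f a * f (m - a)) (a := 0) (b := m)
    fun a _ => abs_coagIntegrand_le hβ hf a (m - a) a (m - a)

lemma coagIntegral_eq_zero (hβ : IsCoagKernel β B L M) (f : ℝ → ℝ) {m : ℝ} (hm : M ≤ m) :
    coagIntegral β f m = 0 := by
  have hβm : ∀ a, β a (m - a) = 0 := fun a => hβ.eq_zero_of_le_add _ _ (by linarith)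
  simp [coagIntegral, hβm]

lemma abs_coagIntegrand_sub_le (hβ : IsCoagKernel β B L M) (hf : ∀ a, |f a| ≤ N)
    (hg : ∀ a, |g a| ≤ N) (hfg : ∀ a b, |f a - g b| ≤ Lσ * (|a - b| + δ)) (hδ : 0 ≤ δ)
    (m m' a : ℝ) :
    |β a (m' - a) * g a * g (m' - a) - β a (m - a) * f a * f (m - a)| ≤
      (B + L) * (N ^ 2 + Lσ ^ 2) * (|m' - m| + δ) := by
  have hB := hβ.bound_nonneg
  have hL := hβ.lipschitzConst_nonneg
  have hβ' : |β a (m' - a) - β a (m - a)| ≤ L * |m' - m| := by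
    simpa using hβ.lipschitz a (m' - a) a (m - a)
  have hg₁ : |g a - f a| ≤ Lσ * δ := by
    rw [abs_sub_comm]
    simpa using hfg a a
  have hg₂ : |g (m' - a) - f (m - a)| ≤ Lσ * (|m' - m| + δ) := by
    rw [abs_sub_comm]
    simpa [abs_sub_comm] using hfg (m - a) (m' - a)
  have hNLσ := two_mul_le_add_sq N Lσ
  calc _ = |(β a (m' - a) - β a (m - a)) * g a * g (m' - a) +
          β a (m - a) * (g a - f a) * g (m' - a) +
          β a (m - a) * f a * (g (m' - a) - f (m - a))| := by ring_nf
    _ ≤ L * |m' - m| * N * N + B * (Lσ * δ) * N + B * N * (Lσ * (|m' - m| + δ)) :=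
        (abs_add_three _ _ _).trans <| add_le_add_three
          (abs_mul_mul_le hβ' (hg a) (hg _)) (abs_mul_mul_le (hβ.abs_le _ _) hg₁ (hg _))
          (abs_mul_mul_le (hβ.abs_le _ _) (hf a) hg₂)
    _ ≤ (B + L) * (N ^ 2 + Lσ ^ 2) * (|m' - m| + δ) := by
        have hm := abs_nonneg (m' - m)
        nlinarith [mul_le_mul_of_nonneg_left hNLσ (mul_nonneg hB hm),
          mul_le_mul_of_nonneg_left hNLσ (mul_nonneg hB hδ),
          mul_nonneg (mul_nonneg hL hm) (sq_nonneg Lσ),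
          mul_nonneg (mul_nonneg hL hδ) (add_nonneg (sq_nonneg N) (sq_nonneg Lσ)),
          mul_nonneg (mul_nonneg hB hm) (add_nonneg (sq_nonneg N) (sq_nonneg Lσ))]

lemma abs_coagIntegral_sub_le (hβ : IsCoagKernel β B L M) (hfm : Measurable f)
    (hgm : Measurable g) (hf : ∀ a, |f a| ≤ N) (hg : ∀ a, |g a| ≤ N)
    (hfg : ∀ a b, |f a - g b| ≤ Lσ * (|a - b| + δ)) (hδ : 0 ≤ δ) {m m' : ℝ} (hm : 0 ≤ m)
    (hmm' : m ≤ m') :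
    |coagIntegral β g m' - coagIntegral β f m| ≤
      (B + L) * (N ^ 2 + Lσ ^ 2) * ((m' - m + δ) * m + (m' - m)) := by
  have hF := intervalIntegrable_coagIntegrand hβ hfm hf m
  have hG := intervalIntegrable_coagIntegrand hβ hgm hg m'
  have hsplit : coagIntegral β g m' - coagIntegral β f m =
      (∫ a in (0:ℝ)..m, (β a (m' - a) * g a * g (m' - a) - β a (m - a) * f a * f (m - a))) +
        ∫ a in m..m', β a (m' - a) * g a * g (m' - a) := by
    rw [coagIntegral, coagIntegral, ← intervalIntegral.integral_add_adjacent_intervals (hG 0 m)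
      (hG m m'), intervalIntegral.integral_sub (hG 0 m) (hF 0 m)]
    ring
  have hdiff := intervalIntegral.norm_integral_le_of_norm_le_const (a := 0) (b := m)
    (f := fun a => β a (m' - a) * g a * g (m' - a) - β a (m - a) * f a * f (m - a))
    fun a _ => abs_coagIntegrand_sub_le hβ hf hg hfg hδ m m' a
  have htail := intervalIntegral.norm_integral_le_of_norm_le_const (a := m) (b := m')
    (f := fun a => β a (m' - a) * g a * g (m' - a))
    fun a _ => (abs_coagIntegrand_le hβ hg a (m' - a) a (m' - a)).trans (hβ.bound_mul_sq_le N Lσ)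
  rw [Real.norm_eq_abs, sub_zero, abs_of_nonneg hm, abs_of_nonneg (sub_nonneg.2 hmm')] at hdiff
  rw [Real.norm_eq_abs, abs_of_nonneg (sub_nonneg.2 hmm')] at htail
  rw [hsplit]
  exact (abs_add_le _ _).trans ((add_le_add hdiff htail).trans_eq (by ring))

lemma abs_half_mul_coagIntegral_sub_le (hβ : IsCoagKernel β B L M) (hfm : Measurable f)
    (hgm : Measurable g) (hf : ∀ a, |f a| ≤ N) (hg : ∀ a, |g a| ≤ N)
    (hfg : ∀ a b, |f a - g b| ≤ Lσ * (|a - b| + δ)) (hδ : 0 ≤ δ) {m m' : ℝ} (hm : 0 ≤ m)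
    (hmm' : m ≤ m') (hm'M : m' ≤ M) :
    |m' / 2 * coagIntegral β g m' - m / 2 * coagIntegral β f m| ≤
      (B + L) * (M + 1) ^ 2 * (N ^ 2 + Lσ ^ 2) * (m' - m + δ) := by
  set K := (B + L) * (N ^ 2 + Lσ ^ 2)
  have hK : 0 ≤ K := mul_nonneg (add_nonneg hβ.bound_nonneg hβ.lipschitzConst_nonneg)
    (by positivity)
  have hG : |coagIntegral β g m'| ≤ K * m' :=
    (abs_coagIntegral_le hβ hg (hm.trans hmm')).trans
      (mul_le_mul_of_nonneg_right (hβ.bound_mul_sq_le N Lσ) (hm.trans hmm'))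
  have hΔ := abs_coagIntegral_sub_le hβ hfm hgm hf hg hfg hδ hm hmm'
  have hmass : (m' - m) * m' / 2 + m / 2 * ((m' - m + δ) * m + (m' - m)) ≤
      (M + 1) ^ 2 * (m' - m + δ) := by
    have hd : 0 ≤ m' - m := sub_nonneg.2 hmm'
    nlinarith [mul_nonneg hd (sub_nonneg.2 hm'M), mul_nonneg hd (sub_nonneg.2 (hmm'.trans hm'M)),
      mul_nonneg hd (mul_nonneg hm (sub_nonneg.2 (hmm'.trans hm'M))),
      mul_nonneg hδ (mul_nonneg hm (sub_nonneg.2 (hmm'.trans hm'M))),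
      mul_nonneg hd hm, mul_nonneg hδ hm]
  calc _ = |(m' - m) / 2 * coagIntegral β g m' +
        m / 2 * (coagIntegral β g m' - coagIntegral β f m)| := by ring_nf
    _ ≤ (m' - m) / 2 * (K * m') + m / 2 * (K * ((m' - m + δ) * m + (m' - m))) := by
        refine (abs_add_le _ _).trans (add_le_add ?_ ?_) <;>
          rw [abs_mul, abs_of_nonneg (by linarith)] <;> gcongr
    _ = K * ((m' - m) * m' / 2 + m / 2 * ((m' - m + δ) * m + (m' - m))) := by ring
    _ ≤ K * ((M + 1) ^ 2 * (m' - m + δ)) := by gcongr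
    _ = _ := by ring

end CoagIntegral

section Qcoag

variable {β : ℝ → ℝ → ℝ} {B L M N Lσ : ℝ} {σ : ℝ → ℝ → Vec 3 → ℝ} {s : ℝ}

lemma Qcoag_eq_projIcc (hβ : IsCoagKernel β B L M) (hM : 0 ≤ M) (m : ℝ) (x : Vec 3) :
    Qcoag β σ s m x = Qcoag β σ s (projIcc 0 M hM m) x := by
  rcases le_total m 0 with hm | hm
  · rw [projIcc_of_le_left hM hm]
    rcases hm.lt_or_eq with hm | rfl
    · simp [Qcoag, hm.not_ge]
    · rfl
  rcases le_total M m with hMm | hmM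
  · rw [projIcc_of_right_le hM hMm, Qcoag_eq_ite, Qcoag_eq_ite, coagIntegral_eq_zero hβ _ hMm,
      coagIntegral_eq_zero hβ _ le_rfl]
    simp
  · rw [projIcc_of_mem hM ⟨hm, hmM⟩]

lemma abs_Qcoag_le (hβ : IsCoagKernel β B L M) (hM : 0 ≤ M)
    (hN : ∀ m, ∀ x ∈ Omg, |σ s m x| ≤ N) (m : ℝ) {x : Vec 3} (hx : x ∈ Omg) :
    |Qcoag β σ s m x| ≤ B * M ^ 2 / 2 * N ^ 2 := by
  rw [Qcoag_eq_projIcc hβ hM]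
  obtain ⟨p, hp0, hpM⟩ := projIcc 0 M hM m
  rw [Qcoag_eq_ite, if_pos hp0, abs_mul, abs_of_nonneg (by positivity)]
  have hB := hβ.bound_nonneg
  calc _ ≤ p / 2 * (B * N ^ 2 * p) := by
        gcongr
        exact abs_coagIntegral_le hβ (fun a => hN a x hx) hp0
    _ = B * p ^ 2 / 2 * N ^ 2 := by ring
    _ ≤ B * M ^ 2 / 2 * N ^ 2 := by gcongr

lemma abs_Qcoag_sub_le_of_le (hβ : IsCoagKernel β B L M)
    (hσ : Measurable (fun z : ℝ × ℝ × Vec 3 => σ z.1 z.2.1 z.2.2))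
    (hN : ∀ m, ∀ x ∈ Omg, |σ s m x| ≤ N)
    (hL : ∀ m m', ∀ x ∈ Omg, ∀ x' ∈ Omg, |σ s m x - σ s m' x'| ≤ Lσ * (|m - m'| + ‖x - x'‖))
    {m m' : ℝ} (hm : 0 ≤ m) (hmm' : m ≤ m') (hm'M : m' ≤ M) {x x' : Vec 3} (hx : x ∈ Omg)
    (hx' : x' ∈ Omg) :
    |Qcoag β σ s m' x' - Qcoag β σ s m x| ≤
      (B + L) * (M + 1) ^ 2 * (N ^ 2 + Lσ ^ 2) * (m' - m + ‖x - x'‖) := by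
  have hσs : ∀ y, Measurable fun a => σ s a y := fun y =>
    hσ.comp (measurable_const.prodMk (measurable_id.prodMk measurable_const))
  rw [Qcoag_eq_ite, Qcoag_eq_ite, if_pos (hm.trans hmm'), if_pos hm]
  exact abs_half_mul_coagIntegral_sub_le hβ (hσs x) (hσs x') (fun a => hN a x hx)
    (fun a => hN a x' hx') (fun a b => hL a b x hx x' hx') (norm_nonneg _) hm hmm' hm'M

lemma abs_Qcoag_sub_le (hβ : IsCoagKernel β B L M) (hM : 0 ≤ M)
    (hσ : Measurable (fun z : ℝ × ℝ × Vec 3 => σ z.1 z.2.1 z.2.2))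
    (hN : ∀ m, ∀ x ∈ Omg, |σ s m x| ≤ N)
    (hL : ∀ m m', ∀ x ∈ Omg, ∀ x' ∈ Omg, |σ s m x - σ s m' x'| ≤ Lσ * (|m - m'| + ‖x - x'‖))
    (m m' : ℝ) {x x' : Vec 3} (hx : x ∈ Omg) (hx' : x' ∈ Omg) :
    |Qcoag β σ s m x - Qcoag β σ s m' x'| ≤
      (B + L) * (M + 1) ^ 2 * (N ^ 2 + Lσ ^ 2) * (|m - m'| + ‖x - x'‖) := by
  have hK : 0 ≤ (B + L) * (M + 1) ^ 2 * (N ^ 2 + Lσ ^ 2) :=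
    mul_nonneg (mul_nonneg (add_nonneg hβ.bound_nonneg hβ.lipschitzConst_nonneg) (sq_nonneg _))
      (by positivity)
  rw [Qcoag_eq_projIcc hβ hM m, Qcoag_eq_projIcc hβ hM m']
  have hpp' := abs_projIcc_sub_projIcc hM (c := m) (d := m')
  obtain ⟨hp0, hpM⟩ := (projIcc 0 M hM m).2
  obtain ⟨hp'0, hp'M⟩ := (projIcc 0 M hM m').2
  set p : ℝ := ↑(projIcc 0 M hM m)
  set p' : ℝ := ↑(projIcc 0 M hM m')
  refine le_trans ?_ (mul_le_mul_of_nonneg_left (add_le_add_left hpp' ‖x - x'‖) hK)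
  rcases le_total p p' with hle | hle
  · rw [abs_sub_comm, abs_sub_comm p, abs_of_nonneg (sub_nonneg.2 hle)]
    exact abs_Qcoag_sub_le_of_le hβ hσ hN hL hp0 hle hp'M hx hx'
  · rw [abs_of_nonneg (sub_nonneg.2 hle), norm_sub_rev]
    exact abs_Qcoag_sub_le_of_le hβ hσ hN hL hp'0 hle hpM hx' hx

end Qcoag

theorem stmt18_general (t₁ Mstar : ℝ) (hMstar : 0 < Mstar)
    (Bβ Lβ : ℝ) :
    ∃ C > 0, ∀ β : ℝ → ℝ → ℝ,
      Measurable (fun z : ℝ × ℝ => β z.1 z.2) →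
      (∀ m m', 0 ≤ β m m') → (∀ m m', β m m' ≤ Bβ) →
      (∀ m m' n n', |β m m' - β n n'| ≤ Lβ * (|m - n| + |m' - n'|)) →
      (∀ m m', Mstar ≤ m + m' → β m m' = 0) →
      ∀ σ : ℝ → ℝ → Vec 3 → ℝ, ∀ N Lσ : ℝ,
      Measurable (fun z : ℝ × ℝ × Vec 3 => σ z.1 z.2.1 z.2.2) →
      -- `N` bounds `|σ|` and `Lσ` is a Lipschitz constant of `σ(s,·,·)`, a.e. in `s`
      (∀ᵐ s ∂(volume.restrict (Set.Ioo 0 t₁)), ∀ m : ℝ, ∀ x ∈ Omg,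
        |σ s m x| ≤ N) →
      (∀ᵐ s ∂(volume.restrict (Set.Ioo 0 t₁)), ∀ m m' : ℝ, ∀ x ∈ Omg, ∀ x' ∈ Omg,
        |σ s m x - σ s m' x'| ≤ Lσ * (|m - m'| + ‖x - x'‖)) →
      ∀ t ∈ Set.Ioc 0 t₁,
        -- (i)
        ((∫ s in (0:ℝ)..t,
            sSup {v | ∃ m : ℝ, ∃ x ∈ Omg, v = |Qcoag β σ s m x|}) ≤
          C * t * N ^ 2) ∧
        -- (ii)  a.e. Lipschitz bound ...
        (∀ᵐ s ∂(volume.restrict (Set.Ioo 0 t)),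
          ∀ m m' : ℝ, ∀ x ∈ Omg, ∀ x' ∈ Omg,
            |Qcoag β σ s m x - Qcoag β σ s m' x'| ≤
              C * (N ^ 2 + Lσ ^ 2) * (|m - m'| + ‖x - x'‖)) ∧
        -- ... and the resulting `L¹` bound on the least Lipschitz constant
        ((∫ s in (0:ℝ)..t,
            sInf {L | 0 ≤ L ∧ ∀ m m' : ℝ, ∀ x ∈ Omg, ∀ x' ∈ Omg,
              |Qcoag β σ s m x - Qcoag β σ s m' x'| ≤
                L * (|m - m'| + ‖x - x'‖)}) ≤
          C * t * (N ^ 2 + Lσ ^ 2)) := by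
  refine ⟨(|Bβ| + |Lβ| + 1) * (Mstar + 1) ^ 2, by positivity, ?_⟩
  intro β hβm hβ0 hβB hβL hβM σ N Lσ hσ hσN hσL t ⟨ht0, htt₁⟩
  have hβ : IsCoagKernel β Bβ Lβ Mstar := ⟨hβm, hβ0, hβB, hβL, hβM⟩
  set C := (|Bβ| + |Lβ| + 1) * (Mstar + 1) ^ 2
  have hCsup : Bβ * Mstar ^ 2 / 2 ≤ C := by
    nlinarith [le_abs_self Bβ, abs_nonneg Lβ, hβ.bound_nonneg,
      mul_nonneg (abs_nonneg Lβ) (sq_nonneg (Mstar + 1))]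
  have hClip : (Bβ + Lβ) * (Mstar + 1) ^ 2 ≤ C := by
    nlinarith [le_abs_self Bβ, le_abs_self Lβ, sq_nonneg (Mstar + 1)]
  have hgood := ae_restrict_of_ae_restrict_of_subset (Ioo_subset_Ioo_right htt₁) (hσN.and hσL)
  have hQlip : ∀ᵐ s ∂volume.restrict (Ioo 0 t), ∀ m m' : ℝ, ∀ x ∈ Omg, ∀ x' ∈ Omg,
      |Qcoag β σ s m x - Qcoag β σ s m' x'| ≤ C * (N ^ 2 + Lσ ^ 2) * (|m - m'| + ‖x - x'‖) :=
    hgood.mono fun s ⟨hN, hL⟩ m m' x hx x' hx' =>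
      (abs_Qcoag_sub_le hβ hMstar.le hσ hN hL m m' hx hx').trans (by gcongr)
  refine ⟨?_, hQlip, ?_⟩
  · refine (intervalIntegral_le_mul_of_ae_le (K := C * N ^ 2) ht0.le (by positivity) ?_).trans_eq
      (by ring)
    filter_upwards [hgood] with s ⟨hN, _⟩
    refine Real.sSup_le ?_ (by positivity)
    rintro _ ⟨m, x, hx, rfl⟩
    exact (abs_Qcoag_le hβ hMstar.le hN m hx).trans (by gcongr)
  · refine (intervalIntegral_le_mul_of_ae_le (K := C * (N ^ 2 + Lσ ^ 2)) ht0.le (by positivity)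
      ?_).trans_eq (by ring)
    filter_upwards [hQlip] with s hs
    exact csInf_le ⟨0, fun _ hL => hL.1⟩ ⟨by positivity, hs⟩

/-- estimates (9-stime-termini-intg) on the coagulation
term `Q_l(σ,σ)`; the constant `C` depends only on `M*`, `sup β`, `Lip β`. -/
theorem stmt18 (t₁ Mstar : ℝ) (ht₁ : 0 < t₁) (hMstar : 0 < Mstar)
    (Bβ Lβ : ℝ) :
    ∃ C > 0, ∀ β : ℝ → ℝ → ℝ,
      Measurable (fun z : ℝ × ℝ => β z.1 z.2) →
      (∀ m m', 0 ≤ β m m') → (∀ m m', β m m' ≤ Bβ) →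
      (∀ m m' n n', |β m m' - β n n'| ≤ Lβ * (|m - n| + |m' - n'|)) →
      (∀ m m', Mstar ≤ m + m' → β m m' = 0) →
      ∀ σ : ℝ → ℝ → Vec 3 → ℝ, ∀ N Lσ : ℝ,
      Measurable (fun z : ℝ × ℝ × Vec 3 => σ z.1 z.2.1 z.2.2) →
      -- `N` bounds `|σ|` and `Lσ` is a Lipschitz constant of `σ(s,·,·)`, a.e. in `s`
      (∀ᵐ s ∂(volume.restrict (Set.Ioo 0 t₁)), ∀ m : ℝ, ∀ x ∈ Omg,
        |σ s m x| ≤ N) →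
      (∀ᵐ s ∂(volume.restrict (Set.Ioo 0 t₁)), ∀ m m' : ℝ, ∀ x ∈ Omg, ∀ x' ∈ Omg,
        |σ s m x - σ s m' x'| ≤ Lσ * (|m - m'| + ‖x - x'‖)) →
      ∀ t ∈ Set.Ioc 0 t₁,
        -- (i)
        ((∫ s in (0:ℝ)..t,
            sSup {v | ∃ m : ℝ, ∃ x ∈ Omg, v = |Qcoag β σ s m x|}) ≤
          C * t * N ^ 2) ∧
        -- (ii)  a.e. Lipschitz bound ...
        (∀ᵐ s ∂(volume.restrict (Set.Ioo 0 t)),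
          ∀ m m' : ℝ, ∀ x ∈ Omg, ∀ x' ∈ Omg,
            |Qcoag β σ s m x - Qcoag β σ s m' x'| ≤
              C * (N ^ 2 + Lσ ^ 2) * (|m - m'| + ‖x - x'‖)) ∧
        -- ... and the resulting `L¹` bound on the least Lipschitz constant
        ((∫ s in (0:ℝ)..t,
            sInf {L | 0 ≤ L ∧ ∀ m m' : ℝ, ∀ x ∈ Omg, ∀ x' ∈ Omg,
              |Qcoag β σ s m x - Qcoag β σ s m' x'| ≤
                L * (|m - m'| + ‖x - x'‖)}) ≤
          C * t * (N ^ 2 + Lσ ^ 2)) :=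
  stmt18_general t₁ Mstar hMstar Bβ Lβ

end
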